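/- Let (D⁺, D⁻) be linearly separable training data in ℝ^p with N⁺ = card D⁺ and N⁻ = card D⁻, let α = (α⁺, α⁻) satisfy 2α⁺ < N⁺ and 2α⁻ < N⁻, let (E⁺, E⁻) be an α-bounded feature attack on (D⁺, D⁻), and let ĥ be an affine classifier that satisfies the majority constraint on (E⁺, E⁻) and minimizes the total 0-1 error err⁺(h, E⁺) + err⁻(h, E⁻) among all affine classifiers h satisfying the majority constraint on (E⁺, E⁻). Then 2·err⁺(ĥ, D⁺) ≤ min(2(2α⁺ + α⁻), 2α⁺ + N⁺ − 1) and 2·err⁻(ĥ, D⁻) ≤ min(2(α⁺ + 2α⁻), 2α⁻ + N⁻ − 1); equivalently, the 0-1 risk of ĥ on D⁺ is at most min(2α⁺ + α⁻, α⁺ + (N⁺ − 1)/2)/N⁺ and on D⁻ is at most min(α⁺ + 2α⁻, α⁻ + (N⁻ − 1)/2)/N⁻. -/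

import Mathlib

/-!
A separator of `(D⁺, D⁻)` errs on at most `α⁺ + α⁻` points of the attacked data and, since
`2α < N`, satisfies the majority constraint there; by optimality `ĥ` errs on at most
`α⁺ + α⁻` attacked points as well. Since the attacked multisets have the original sizes,
`card (D - E) = card (E - D)`, so error counts move by at most `α⁺` (resp. `α⁻`) between
`D` and `E` in either direction. The bounds `2α⁺ + N⁺ - 1` and `2α⁻ + N⁻ - 1` come from
the majority constraint on `ĥ` alone.
-/

open scoped Classical BigOperators

/-- Value of the affine classifier `h = (w, b)` at feature vector `x`. -/
noncomputable def hval {p : ℕ} (h : (Fin p → ℝ) × ℝ) (x : Fin p → ℝ) : ℝ :=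
  (∑ i, h.1 i * x i) + h.2

/-- Number of positive feature vectors in `S` misclassified by `h` (with multiplicity). -/
noncomputable def errPos {p : ℕ} (h : (Fin p → ℝ) × ℝ) (S : Multiset (Fin p → ℝ)) : ℕ :=
  Multiset.countP (fun x => hval h x ≤ 0) S

/-- Number of negative feature vectors in `S` misclassified by `h` (with multiplicity). -/
noncomputable def errNeg {p : ℕ} (h : (Fin p → ℝ) × ℝ) (S : Multiset (Fin p → ℝ)) : ℕ :=
  Multiset.countP (fun x => 0 < hval h x) S

/-- `(Ep, En)` is an `(ap, an)`-bounded feature attack on `(Dp, Dn)`. -/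
noncomputable def IsBFA {p : ℕ} (ap an : ℕ) (Dp Dn Ep En : Multiset (Fin p → ℝ)) : Prop :=
  Multiset.card Ep = Multiset.card Dp ∧
  Multiset.card En = Multiset.card Dn ∧
  Multiset.card (Ep - Dp) ≤ ap ∧
  Multiset.card (En - Dn) ≤ an

/-- `(Dp, Dn)` is linearly separable. -/
def LinSep {p : ℕ} (Dp Dn : Multiset (Fin p → ℝ)) : Prop :=
  ∃ h : (Fin p → ℝ) × ℝ, errPos h Dp = 0 ∧ errNeg h Dn = 0

/-- `h` satisfies the majority constraint on `(Ep, En)`. -/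
def Majority {p : ℕ} (h : (Fin p → ℝ) × ℝ) (Ep En : Multiset (Fin p → ℝ)) : Prop :=
  2 * errPos h Ep < Multiset.card Ep ∧ 2 * errNeg h En < Multiset.card En

namespace Multiset

variable {α : Type*} [DecidableEq α]

lemma countP_le_countP_add_card_sub (q : α → Prop) [DecidablePred q] (s t : Multiset α) :
    countP q s ≤ countP q t + card (s - t) :=
  calc countP q s
      ≤ countP q (s - t + t) := countP_le_of_le q Multiset.le_sub_add
    _ = countP q (s - t) + countP q t := countP_add q _ _
    _ ≤ card (s - t) + countP q t := Nat.add_le_add_right (countP_le_card q _) _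
    _ = countP q t + card (s - t) := Nat.add_comm _ _

lemma card_sub_comm_of_card_eq {s t : Multiset α} (h : card s = card t) :
    card (t - s) = card (s - t) := by
  have hs := congrArg card (sub_add_inter s t)
  have ht := congrArg card (sub_add_inter t s)
  rw [card_add] at hs ht
  rw [inter_comm] at ht
  omega

end Multiset

namespace IsBFA

variable {p ap an : ℕ} {Dp Dn Ep En : Multiset (Fin p → ℝ)}

lemma errPos_le (hA : IsBFA ap an Dp Dn Ep En) (h : (Fin p → ℝ) × ℝ) :
    errPos h Dp ≤ errPos h Ep + ap := by
  have hcard := Multiset.card_sub_comm_of_card_eq hA.1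
  exact (Multiset.countP_le_countP_add_card_sub _ Dp Ep).trans
    (Nat.add_le_add_left (hcard.trans_le hA.2.2.1) _)

lemma errPos_attack_le (hA : IsBFA ap an Dp Dn Ep En) (h : (Fin p → ℝ) × ℝ) :
    errPos h Ep ≤ errPos h Dp + ap :=
  (Multiset.countP_le_countP_add_card_sub _ Ep Dp).trans (Nat.add_le_add_left hA.2.2.1 _)

lemma errNeg_le (hA : IsBFA ap an Dp Dn Ep En) (h : (Fin p → ℝ) × ℝ) :
    errNeg h Dn ≤ errNeg h En + an := by
  have hcard := Multiset.card_sub_comm_of_card_eq hA.2.1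
  exact (Multiset.countP_le_countP_add_card_sub _ Dn En).trans
    (Nat.add_le_add_left (hcard.trans_le hA.2.2.2) _)

lemma errNeg_attack_le (hA : IsBFA ap an Dp Dn Ep En) (h : (Fin p → ℝ) × ℝ) :
    errNeg h En ≤ errNeg h Dn + an :=
  (Multiset.countP_le_countP_add_card_sub _ En Dn).trans (Nat.add_le_add_left hA.2.2.2 _)

variable {h : (Fin p → ℝ) × ℝ}

lemma majority_of_separates (hA : IsBFA ap an Dp Dn Ep En)
    (hp : errPos h Dp = 0) (hn : errNeg h Dn = 0)
    (hap : 2 * ap < Multiset.card Dp) (han : 2 * an < Multiset.card Dn) :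
    Majority h Ep En := by
  have hEp := hA.errPos_attack_le h
  have hEn := hA.errNeg_attack_le h
  rw [Majority, hA.1, hA.2.1]
  omega

lemma errPos_add_errNeg_le_of_separates (hA : IsBFA ap an Dp Dn Ep En)
    (hp : errPos h Dp = 0) (hn : errNeg h Dn = 0) :
    errPos h Ep + errNeg h En ≤ ap + an := by
  have hEp := hA.errPos_attack_le h
  have hEn := hA.errNeg_attack_le h
  omega

end IsBFA

theorem stmt11_general {p : ℕ}
    (Dp Dn Ep En : Multiset (Fin p → ℝ)) (ap an : ℕ)
    (hsep : LinSep Dp Dn)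
    (hap : 2 * ap < Multiset.card Dp) (han : 2 * an < Multiset.card Dn)
    (hBFA : IsBFA ap an Dp Dn Ep En)
    (hhat : (Fin p → ℝ) × ℝ)
    (hmaj : Majority hhat Ep En)
    (hopt : ∀ h : (Fin p → ℝ) × ℝ, Majority h Ep En →
      errPos hhat Ep + errNeg hhat En ≤ errPos h Ep + errNeg h En) :
    2 * errPos hhat Dp ≤ min (2 * (2 * ap + an)) (2 * ap + Multiset.card Dp - 1) ∧
    2 * errNeg hhat Dn ≤ min (2 * (ap + 2 * an)) (2 * an + Multiset.card Dn - 1) := by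
  obtain ⟨hstar, hsp, hsn⟩ := hsep
  have hfit : errPos hhat Ep + errNeg hhat En ≤ ap + an :=
    (hopt hstar (hBFA.majority_of_separates hsp hsn hap han)).trans
      (hBFA.errPos_add_errNeg_le_of_separates hsp hsn)
  have hDp := hBFA.errPos_le hhat
  have hDn := hBFA.errNeg_le hhat
  obtain ⟨hmp, hmn⟩ := hmaj
  rw [hBFA.1] at hmp
  rw [hBFA.2.1] at hmn
  constructor <;> apply le_min <;> omega

theorem stmt11 {p : ℕ} (hp : 1 ≤ p)
    (Dp Dn Ep En : Multiset (Fin p → ℝ)) (ap an : ℕ)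
    (hsep : LinSep Dp Dn)
    (hap : 2 * ap < Multiset.card Dp) (han : 2 * an < Multiset.card Dn)
    (hBFA : IsBFA ap an Dp Dn Ep En)
    (hhat : (Fin p → ℝ) × ℝ)
    (hmaj : Majority hhat Ep En)
    (hopt : ∀ h : (Fin p → ℝ) × ℝ, Majority h Ep En →
      errPos hhat Ep + errNeg hhat En ≤ errPos h Ep + errNeg h En) :
    2 * errPos hhat Dp ≤ min (2 * (2 * ap + an)) (2 * ap + Multiset.card Dp - 1) ∧
    2 * errNeg hhat Dn ≤ min (2 * (ap + 2 * an)) (2 * an + Multiset.card Dn - 1) :=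
  stmt11_general Dp Dn Ep En ap an hsep hap han hBFA hhat hmaj hopt
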